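/- arXiv:2511.19177 — 2 statements merged into one kernel-verified Lean document; each statement's English description precedes it below -/
import Mathlib

section
/- For any finite family F of N ≥ 1 pairwise non-equivalent formulas, there exists a narrowing set T with |T| ≤ N − 1. -/
/-!
Pick an instance lying in some but not all members of `F` and split `F` into the members
containing it and the rest. Both halves are nonempty and strictly smaller, so recursing yields
a binary tree with `F.card` leaves, whose `F.card - 1` internal nodes form a narrowing set.
-/

def IsNarrowingSet {α : Type*} (F : Finset (Set α)) (T : Finset α) : Prop :=
  ∀ φ ∈ F, ∀ ψ ∈ F, φ ≠ ψ → ∃ I ∈ T, ((I ∈ φ) ↔ (I ∉ ψ))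

namespace IsNarrowingSet

variable {α : Type*}

theorem empty_of_card_le_one {F : Finset (Set α)} (hF : F.card ≤ 1) : IsNarrowingSet F ∅ :=
  fun φ hφ ψ hψ hne => absurd (Finset.card_le_one.mp hF φ hφ ψ hψ) hne

open Classical in
theorem insert_union [DecidableEq α] {F : Finset (Set α)} {x : α} {T₁ T₂ : Finset α}
    (h₁ : IsNarrowingSet {φ ∈ F | x ∈ φ} T₁) (h₂ : IsNarrowingSet {φ ∈ F | x ∉ φ} T₂) :
    IsNarrowingSet F (insert x (T₁ ∪ T₂)) := by
  intro φ hφ ψ hψ hne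
  by_cases hxφ : x ∈ φ <;> by_cases hxψ : x ∈ ψ
  · obtain ⟨I, hI, hsep⟩ := h₁ φ (by simp [hφ, hxφ]) ψ (by simp [hψ, hxψ]) hne
    exact ⟨I, by simp [hI], hsep⟩
  · exact ⟨x, Finset.mem_insert_self _ _, by tauto⟩
  · exact ⟨x, Finset.mem_insert_self _ _, by tauto⟩
  · obtain ⟨I, hI, hsep⟩ := h₂ φ (by simp [hφ, hxφ]) ψ (by simp [hψ, hxψ]) hne
    exact ⟨I, by simp [hI], hsep⟩

end IsNarrowingSet

theorem Finset.exists_mem_notMem_of_one_lt_card {α : Type*} {F : Finset (Set α)}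
    (hF : 1 < F.card) : ∃ φ ∈ F, ∃ ψ ∈ F, ∃ x, x ∈ φ ∧ x ∉ ψ := by
  obtain ⟨φ, hφ, ψ, hψ, hne⟩ := Finset.one_lt_card.mp hF
  by_cases hsub : φ ⊆ ψ
  · obtain ⟨x, hxψ, hxφ⟩ := Set.not_subset.mp fun h => hne (hsub.antisymm h)
    exact ⟨ψ, hψ, φ, hφ, x, hxψ, hxφ⟩
  · obtain ⟨x, hxφ, hxψ⟩ := Set.not_subset.mp hsub
    exact ⟨φ, hφ, ψ, hψ, x, hxφ, hxψ⟩

theorem exists_isNarrowingSet_card_le {α : Type*} (F : Finset (Set α)) :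
    ∃ T : Finset α, IsNarrowingSet F T ∧ T.card ≤ F.card - 1 := by
  classical
  induction F using Finset.strongInduction with
  | H F ih =>
    by_cases hF : F.card ≤ 1
    · exact ⟨∅, IsNarrowingSet.empty_of_card_le_one hF, by simp⟩
    obtain ⟨φ, hφ, ψ, hψ, x, hxφ, hxψ⟩ := Finset.exists_mem_notMem_of_one_lt_card (not_le.mp hF)
    set F₁ := {φ ∈ F | x ∈ φ}
    set F₂ := {φ ∈ F | x ∉ φ}
    have hφ₁ : φ ∈ F₁ := Finset.mem_filter.mpr ⟨hφ, hxφ⟩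
    have hψ₂ : ψ ∈ F₂ := Finset.mem_filter.mpr ⟨hψ, hxψ⟩
    obtain ⟨T₁, hT₁, hcard₁⟩ := ih F₁ (Finset.filter_ssubset.mpr ⟨ψ, hψ, hxψ⟩)
    obtain ⟨T₂, hT₂, hcard₂⟩ := ih F₂ (Finset.filter_ssubset.mpr ⟨φ, hφ, not_not.mpr hxφ⟩)
    refine ⟨insert x (T₁ ∪ T₂), hT₁.insert_union hT₂, ?_⟩
    have hsplit : F₁.card + F₂.card = F.card := Finset.card_filter_add_card_filter_not _
    have hpos₁ : 0 < F₁.card := Finset.card_pos.mpr ⟨φ, hφ₁⟩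
    have hpos₂ : 0 < F₂.card := Finset.card_pos.mpr ⟨ψ, hψ₂⟩
    calc (insert x (T₁ ∪ T₂)).card ≤ (T₁ ∪ T₂).card + 1 := Finset.card_insert_le _ _
      _ ≤ T₁.card + T₂.card + 1 := by grw [Finset.card_union_le]
      _ ≤ F.card - 1 := by omega

theorem narrowing_upper_bound_general {α : Type*} (F : Finset (Set α)) (N : ℕ)
    (hcard : F.card = N) :
    ∃ T : Finset α, T.card ≤ N - 1 ∧
      ∀ φ ∈ F, ∀ ψ ∈ F, φ ≠ ψ → ∃ I ∈ T, ((I ∈ φ) ↔ (I ∉ ψ)) := by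
  obtain ⟨T, hT, hcardT⟩ := exists_isNarrowingSet_card_le F
  exact ⟨T, hcard ▸ hcardT, hT⟩

/-- Every family of `N ≥ 1` pairwise non-equivalent formulas admits a narrowing set
of size at most `N - 1`. -/
theorem narrowing_upper_bound {α : Type*} (F : Finset (Set α)) (N : ℕ)
    (hN : 1 ≤ N) (hcard : F.card = N) :
    ∃ T : Finset α, T.card ≤ N - 1 ∧
      ∀ φ ∈ F, ∀ ψ ∈ F, φ ≠ ψ → ∃ I ∈ T, ((I ∈ φ) ↔ (I ∉ ψ)) :=
  narrowing_upper_bound_general F N hcard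
end

section
/- The upper bound N − 1 is tight: for every N ≥ 1, the chain family F = {{1,…,i} : 0 ≤ i ≤ N−1} of subsets of Fin (N−1) consists of N pairwise distinct sets, and any narrowing set for F must contain at least N − 1 instances; in fact T = Fin (N−1) itself is a minimal narrowing set. -/
/-! Two members of the chain differ exactly on the instances lying between their indices.
So consecutive members `x` and `x + 1` are told apart only by the instance `x`, which forces
every narrowing set to be all of `Fin (N - 1)`, while the smaller index always separates. -/

def chainFam (N : ℕ) (i : Fin N) : Set (Fin (N - 1)) := {j | (j : ℕ) < (i : ℕ)}

section ChainFamily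

variable {N : ℕ}

theorem chainFam_separates_iff (x : Fin (N - 1)) (i j : Fin N) :
    (x ∈ chainFam N i ↔ x ∉ chainFam N j) ↔
      (i : ℕ) ≤ x ∧ (x : ℕ) < j ∨ (j : ℕ) ≤ x ∧ (x : ℕ) < i := by
  simp only [chainFam, Set.mem_ofPred_eq]
  omega

theorem exists_chainFam_separates {i j : Fin N} (hij : i ≠ j) :
    ∃ x : Fin (N - 1), x ∈ chainFam N i ↔ x ∉ chainFam N j := by
  have hmin : min (i : ℕ) j < N - 1 := by omega
  refine ⟨⟨min i j, hmin⟩, (chainFam_separates_iff _ i j).2 ?_⟩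
  dsimp only
  omega

theorem chainFam_injective : Function.Injective (chainFam N) := by
  intro i j hij
  by_contra hne
  obtain ⟨x, hx⟩ := exists_chainFam_separates hne
  rw [hij] at hx
  exact iff_not_self hx

theorem eq_of_chainFam_separates_succ {x y : Fin (N - 1)}
    (h : y ∈ chainFam N ⟨x, by omega⟩ ↔ y ∉ chainFam N ⟨x + 1, by omega⟩) : y = x := by
  rw [chainFam_separates_iff] at h
  simp only [Fin.ext_iff] at h ⊢
  omega

theorem eq_univ_of_separates_chainFam {T : Finset (Fin (N - 1))}
    (hT : ∀ i j : Fin N, i ≠ j → ∃ x ∈ T, (x ∈ chainFam N i ↔ x ∉ chainFam N j)) :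
    T = Finset.univ := by
  refine Finset.eq_univ_of_forall fun x => ?_
  obtain ⟨y, hyT, hy⟩ := hT ⟨x, by omega⟩ ⟨x + 1, by omega⟩ (by simp [Fin.ext_iff])
  rwa [← eq_of_chainFam_separates_succ hy]

end ChainFamily

theorem chain_upper_bound_tight_general (N : ℕ) :
    Function.Injective (chainFam N) ∧
    (∀ T : Finset (Fin (N - 1)),
      (∀ i j : Fin N, i ≠ j → ∃ x ∈ T, ((x ∈ chainFam N i) ↔ (x ∉ chainFam N j))) →
      N - 1 ≤ T.card) ∧
    (∀ i j : Fin N, i ≠ j →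
      ∃ x ∈ (Finset.univ : Finset (Fin (N - 1))),
        ((x ∈ chainFam N i) ↔ (x ∉ chainFam N j))) := by
  refine ⟨chainFam_injective, fun T hT => ?_, fun i j hij => ?_⟩
  · rw [eq_univ_of_separates_chainFam hT, Finset.card_univ, Fintype.card_fin]
  · obtain ⟨x, hx⟩ := exists_chainFam_separates hij
    exact ⟨x, Finset.mem_univ x, hx⟩

/-- The upper bound `N - 1` is tight: the chain family consists of `N` pairwise
distinct sets, any narrowing set for it has at least `N - 1` instances, and
`T = Fin (N-1)` itself is a narrowing set (hence minimal). -/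
theorem chain_upper_bound_tight (N : ℕ) (hN : 1 ≤ N) :
    Function.Injective (chainFam N) ∧
    (∀ T : Finset (Fin (N - 1)),
      (∀ i j : Fin N, i ≠ j → ∃ x ∈ T, ((x ∈ chainFam N i) ↔ (x ∉ chainFam N j))) →
      N - 1 ≤ T.card) ∧
    (∀ i j : Fin N, i ≠ j →
      ∃ x ∈ (Finset.univ : Finset (Fin (N - 1))),
        ((x ∈ chainFam N i) ↔ (x ∉ chainFam N j))) :=
  chain_upper_bound_tight_general N
end
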